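/- arXiv:2404.03568 — 3 statements merged into one kernel-verified Lean document; each statement's English description precedes it below -/
import Mathlib

section
/- For every u in the space X_β = H¹(ℝⁿ) ∩ Ḣ^{-β}(ℝⁿ), the sharp two-sided inequality ‖u‖²_{Ẋ_β} ≤ ‖u‖²_{X_β} ≤ (1 + β^{β/(1+β)}/(1+β)) ‖u‖²_{Ẋ_β} holds, where ‖u‖²_{X_β} = ‖u‖²_{H¹} + ‖D^{-β}u‖²_{L²} and ‖u‖²_{Ẋ_β} = ‖∇u‖²_{L²} + ‖D^{-β}u‖²_{L²}. -/
open Real MeasureTheory FourierTransform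

lemma key_amgm {β : ℝ} (hβ : 0 < β) {s : ℝ} (hs : 0 < s) :
    1 ≤ β ^ (β / (1 + β)) / (1 + β) * (s + s ^ (-β)) := by
  have h1β : (0:ℝ) < 1 + β := by linarith
  have hw1 : (0:ℝ) ≤ β / (1 + β) := by positivity
  have hw2 : (0:ℝ) ≤ 1 / (1 + β) := by positivity
  have hw : β / (1 + β) + 1 / (1 + β) = 1 := by field_simp; ring
  have hp1 : (0:ℝ) ≤ (1 + β) / β * s := by positivity
  have hp2 : (0:ℝ) ≤ (1 + β) * s ^ (-β) := by positivity
  have amgm := Real.geom_mean_le_arith_mean2_weighted hw1 hw2 hp1 hp2 hw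
  have hrhs : β / (1 + β) * ((1 + β) / β * s) + 1 / (1 + β) * ((1 + β) * s ^ (-β))
      = s + s ^ (-β) := by field_simp
  have hlhs : ((1 + β) / β * s) ^ (β / (1 + β)) * ((1 + β) * s ^ (-β)) ^ (1 / (1 + β))
      = (1 + β) / β ^ (β / (1 + β)) := by
    rw [Real.mul_rpow (by positivity) hs.le, Real.mul_rpow h1β.le (by positivity),
      Real.div_rpow h1β.le hβ.le, ← Real.rpow_mul hs.le]
    have h1 : -β * (1 / (1 + β)) = -(β / (1 + β)) := by ring
    have e1 : s ^ (β / (1 + β)) * s ^ (-(β / (1 + β))) = 1 := by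
      rw [← Real.rpow_add hs]; simp
    have e2 : (1 + β) ^ (β / (1 + β)) * (1 + β) ^ (1 / (1 + β)) = 1 + β := by
      rw [← Real.rpow_add h1β, hw, Real.rpow_one]
    calc (1 + β) ^ (β / (1 + β)) / β ^ (β / (1 + β)) * s ^ (β / (1 + β)) *
          ((1 + β) ^ (1 / (1 + β)) * s ^ (-β * (1 / (1 + β))))
        = ((1 + β) ^ (β / (1 + β)) * (1 + β) ^ (1 / (1 + β))) *
            (s ^ (β / (1 + β)) * s ^ (-(β / (1 + β)))) / β ^ (β / (1 + β)) := by
          rw [h1]; ring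
      _ = (1 + β) / β ^ (β / (1 + β)) := by rw [e1, e2, mul_one]
  rw [hlhs, hrhs] at amgm
  have := mul_le_mul_of_nonneg_left amgm (le_of_lt (by positivity :
    (0:ℝ) < β ^ (β / (1 + β)) / (1 + β)))
  calc (1:ℝ) = β ^ (β / (1 + β)) / (1 + β) * ((1 + β) / β ^ (β / (1 + β))) := by
        field_simp
    _ ≤ β ^ (β / (1 + β)) / (1 + β) * (s + s ^ (-β)) := this

/-- Sharp two-sided comparison of the inhomogeneous `X_β` norm
`‖u‖²_{X_β} = ‖u‖²_{H¹} + ‖D^{-β}u‖²_{L²}` and the homogeneous norm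
`‖u‖²_{Ẋ_β} = ‖∇u‖²_{L²} + ‖D^{-β}u‖²_{L²}`, expressed on the Fourier side by Plancherel:
`‖u‖²_{Ẋ_β} ≤ ‖u‖²_{X_β} ≤ (1 + β^{β/(1+β)}/(1+β)) ‖u‖²_{Ẋ_β}`. -/
theorem stmt3 (n : ℕ) (β : ℝ) (hβ : 0 < β) (hβn : β < n / 2)
    (u : EuclideanSpace ℝ (Fin n) → ℂ)
    (h1 : Integrable (fun ξ : EuclideanSpace ℝ (Fin n) => (1 + ‖ξ‖ ^ 2) * ‖𝓕 u ξ‖ ^ 2))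
    (h2 : Integrable (fun ξ : EuclideanSpace ℝ (Fin n) => ‖ξ‖ ^ (-2 * β) * ‖𝓕 u ξ‖ ^ 2)) :
    (∫ ξ : EuclideanSpace ℝ (Fin n), ‖ξ‖ ^ 2 * ‖𝓕 u ξ‖ ^ 2) +
        (∫ ξ : EuclideanSpace ℝ (Fin n), ‖ξ‖ ^ (-2 * β) * ‖𝓕 u ξ‖ ^ 2)
      ≤ (∫ ξ : EuclideanSpace ℝ (Fin n), (1 + ‖ξ‖ ^ 2) * ‖𝓕 u ξ‖ ^ 2) +
        (∫ ξ : EuclideanSpace ℝ (Fin n), ‖ξ‖ ^ (-2 * β) * ‖𝓕 u ξ‖ ^ 2) ∧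
    (∫ ξ : EuclideanSpace ℝ (Fin n), (1 + ‖ξ‖ ^ 2) * ‖𝓕 u ξ‖ ^ 2) +
        (∫ ξ : EuclideanSpace ℝ (Fin n), ‖ξ‖ ^ (-2 * β) * ‖𝓕 u ξ‖ ^ 2)
      ≤ (1 + β ^ (β / (1 + β)) / (1 + β)) *
        ((∫ ξ : EuclideanSpace ℝ (Fin n), ‖ξ‖ ^ 2 * ‖𝓕 u ξ‖ ^ 2) +
          (∫ ξ : EuclideanSpace ℝ (Fin n), ‖ξ‖ ^ (-2 * β) * ‖𝓕 u ξ‖ ^ 2)) := by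
  have hn : 0 < n := by
    have h0 : (0:ℝ) < (n:ℝ) := by nlinarith
    exact_mod_cast h0
  haveI : Nontrivial (EuclideanSpace ℝ (Fin n)) :=
    Module.nontrivial_of_finrank_pos (R := ℝ)
      (by rw [finrank_euclideanSpace_fin]; exact hn)
  have hfnn : ∀ ξ : EuclideanSpace ℝ (Fin n), (0:ℝ) ≤ ‖𝓕 u ξ‖ ^ 2 := fun ξ => sq_nonneg _
  -- measurability of the L² density
  have hcont : Continuous fun ξ : EuclideanSpace ℝ (Fin n) => ((1 + ‖ξ‖ ^ 2)⁻¹ : ℝ) := by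
    apply Continuous.inv₀ (by continuity)
    intro ξ; positivity
  have hmeas : AEStronglyMeasurable (fun ξ : EuclideanSpace ℝ (Fin n) => ‖𝓕 u ξ‖ ^ 2)
      (volume : Measure (EuclideanSpace ℝ (Fin n))) := by
    have h := hcont.aestronglyMeasurable.mul h1.aestronglyMeasurable
    refine h.congr (Filter.Eventually.of_forall fun ξ => ?_)
    have hpos : (0:ℝ) < 1 + ‖ξ‖ ^ 2 := by positivity
    simp only [Pi.mul_apply]
    rw [inv_mul_cancel_left₀ hpos.ne']
  have hf_int : Integrable (fun ξ : EuclideanSpace ℝ (Fin n) => ‖𝓕 u ξ‖ ^ 2) := by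
    refine h1.mono' hmeas (Filter.Eventually.of_forall fun ξ => ?_)
    rw [Real.norm_of_nonneg (hfnn ξ)]
    nlinarith [hfnn ξ, sq_nonneg ‖ξ‖]
  have hg1_int : Integrable (fun ξ : EuclideanSpace ℝ (Fin n) => ‖ξ‖ ^ 2 * ‖𝓕 u ξ‖ ^ 2) := by
    refine h1.mono' (((continuous_norm.pow 2).aestronglyMeasurable).mul hmeas)
      (Filter.Eventually.of_forall fun ξ => ?_)
    rw [Real.norm_of_nonneg (by positivity)]
    nlinarith [hfnn ξ, sq_nonneg ‖ξ‖]
  have hsplit : (∫ ξ : EuclideanSpace ℝ (Fin n), (1 + ‖ξ‖ ^ 2) * ‖𝓕 u ξ‖ ^ 2)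
      = (∫ ξ : EuclideanSpace ℝ (Fin n), ‖𝓕 u ξ‖ ^ 2)
        + (∫ ξ : EuclideanSpace ℝ (Fin n), ‖ξ‖ ^ 2 * ‖𝓕 u ξ‖ ^ 2) := by
    rw [← integral_add hf_int hg1_int]
    congr 1; ext ξ; ring
  have hL2 : 0 ≤ ∫ ξ : EuclideanSpace ℝ (Fin n), ‖𝓕 u ξ‖ ^ 2 := integral_nonneg hfnn
  have hH : 0 ≤ ∫ ξ : EuclideanSpace ℝ (Fin n), ‖ξ‖ ^ (-2 * β) * ‖𝓕 u ξ‖ ^ 2 :=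
    integral_nonneg fun ξ => mul_nonneg (Real.rpow_nonneg (norm_nonneg _) _) (hfnn ξ)
  have hA : 0 ≤ ∫ ξ : EuclideanSpace ℝ (Fin n), ‖ξ‖ ^ 2 * ‖𝓕 u ξ‖ ^ 2 :=
    integral_nonneg fun ξ => mul_nonneg (by positivity) (hfnn ξ)
  constructor
  · rw [hsplit]; linarith
  · have hCnn : 0 ≤ β ^ (β / (1 + β)) / (1 + β) := by positivity
    have hae : ∀ᵐ ξ : EuclideanSpace ℝ (Fin n), ξ ≠ 0 := by
      rw [ae_iff]
      simp only [not_not, Set.setOf_eq_eq_singleton]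
      exact measure_singleton 0
    have hptwise : ∀ᵐ ξ : EuclideanSpace ℝ (Fin n), ‖𝓕 u ξ‖ ^ 2
        ≤ β ^ (β / (1 + β)) / (1 + β)
          * (‖ξ‖ ^ 2 * ‖𝓕 u ξ‖ ^ 2 + ‖ξ‖ ^ (-2 * β) * ‖𝓕 u ξ‖ ^ 2) := by
      filter_upwards [hae] with ξ hξ
      have hnorm : 0 < ‖ξ‖ := norm_pos_iff.mpr hξ
      have hs : (0:ℝ) < ‖ξ‖ ^ 2 := by positivity
      have hk := key_amgm hβ hs
      have hrw : ((‖ξ‖ ^ 2 : ℝ)) ^ (-β) = ‖ξ‖ ^ (-2 * β) := by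
        rw [← Real.rpow_natCast ‖ξ‖ 2, ← Real.rpow_mul (norm_nonneg ξ)]
        norm_num
      rw [hrw] at hk
      calc ‖𝓕 u ξ‖ ^ 2 = 1 * ‖𝓕 u ξ‖ ^ 2 := (one_mul _).symm
        _ ≤ (β ^ (β / (1 + β)) / (1 + β) * (‖ξ‖ ^ 2 + ‖ξ‖ ^ (-2 * β))) * ‖𝓕 u ξ‖ ^ 2 :=
            mul_le_mul_of_nonneg_right hk (hfnn ξ)
        _ = β ^ (β / (1 + β)) / (1 + β)
              * (‖ξ‖ ^ 2 * ‖𝓕 u ξ‖ ^ 2 + ‖ξ‖ ^ (-2 * β) * ‖𝓕 u ξ‖ ^ 2) := by ring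
    have hint_rhs : Integrable (fun ξ : EuclideanSpace ℝ (Fin n) =>
        β ^ (β / (1 + β)) / (1 + β)
          * (‖ξ‖ ^ 2 * ‖𝓕 u ξ‖ ^ 2 + ‖ξ‖ ^ (-2 * β) * ‖𝓕 u ξ‖ ^ 2)) := by
      exact ((hg1_int.add h2).const_mul _)
    have hle := integral_mono_ae hf_int hint_rhs hptwise
    rw [integral_const_mul, integral_add hg1_int h2] at hle
    rw [hsplit]
    nlinarith [hle, hA, hH, hCnn]
end

section
/- (Bégout's lemma) Let J = [0,T) be an interval, q > 1, b > 0, a ∈ ℝ, set ϑ = (bq)^{-1/(q-1)} and f(r) = a - r + b r^q for r ≥ 0. Let G be a continuous nonnegative function on J with G(0) < ϑ, a < (1 - 1/q)ϑ, and f(G(t)) ≥ 0 for all t ∈ J. Then G(t) < ϑ for all t ∈ J. -/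
open Real Set

/-- Bégout's lemma: let `J = [0,T)`, `q > 1`, `b > 0`, `a ∈ ℝ`, `ϑ = (bq)^{-1/(q-1)}`,
`f(r) = a - r + b r^q`. If `G` is continuous and nonnegative on `J`, `G(0) < ϑ`,
`a < (1 - 1/q)ϑ` and `f(G(t)) ≥ 0` on `J`, then `G(t) < ϑ` on `J`. -/
theorem stmt7 (T : ℝ) (hT : 0 < T) (q b a : ℝ) (hq : 1 < q) (hb : 0 < b)
    (G : ℝ → ℝ) (hGc : ContinuousOn G (Set.Ico 0 T))
    (hGnn : ∀ t ∈ Set.Ico (0:ℝ) T, 0 ≤ G t)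
    (hG0 : G 0 < (b * q) ^ (-(1 / (q - 1))))
    (ha : a < (1 - 1 / q) * (b * q) ^ (-(1 / (q - 1))))
    (hf : ∀ t ∈ Set.Ico (0:ℝ) T, 0 ≤ a - G t + b * G t ^ q) :
    ∀ t ∈ Set.Ico (0:ℝ) T, G t < (b * q) ^ (-(1 / (q - 1))) := by
  set ϑ : ℝ := (b * q) ^ (-(1 / (q - 1))) with hϑdef
  have hbq : 0 < b * q := by positivity
  have hq1 : 0 < q - 1 := by linarith
  have hϑpos : 0 < ϑ := Real.rpow_pos_of_pos hbq _
  -- key computation : b * ϑ ^ q = ϑ / q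
  have hkey : b * ϑ ^ q = ϑ / q := by
    have h1 : ϑ ^ q = (b * q) ^ (-(1 / (q - 1)) * q) := by
      rw [hϑdef, ← Real.rpow_mul hbq.le]
    have h2 : b * q * (b * q) ^ (-(1 / (q - 1)) * q) = ϑ := by
      rw [hϑdef]
      nth_rewrite 1 [show b * q = (b * q) ^ (1 : ℝ) by rw [Real.rpow_one]]
      rw [← Real.rpow_add hbq]
      congr 1
      field_simp
      ring
    have hq0 : q ≠ 0 := by positivity
    rw [h1, eq_div_iff (by positivity : q ≠ 0)]
    linear_combination h2
  have hfϑ : a - ϑ + b * ϑ ^ q < 0 := by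
    rw [hkey]
    have : a - ϑ + ϑ / q = a - (1 - 1 / q) * ϑ := by
      field_simp
      ring
    rw [this]
    linarith
  have hne : ∀ t ∈ Set.Ico (0:ℝ) T, G t ≠ ϑ := by
    intro t ht h
    have := hf t ht
    rw [h] at this
    linarith
  intro t ht
  rcases lt_or_ge (G t) ϑ with h | h
  · exact h
  · exfalso
    have hsub : Set.Icc (0:ℝ) t ⊆ Set.Ico 0 T := fun x hx =>
      ⟨hx.1, lt_of_le_of_lt hx.2 ht.2⟩
    have hc : ContinuousOn G (Set.Icc 0 t) := hGc.mono hsub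
    have := intermediate_value_Icc ht.1 hc
    have hmem : ϑ ∈ Set.Icc (G 0) (G t) := ⟨hG0.le, h⟩
    obtain ⟨c, hc1, hc2⟩ := this hmem
    exact hne c (hsub hc1) hc2
end

section
/- Let m(ξ) = |ξ|² + ε|ξ|^{-2β} on ℝⁿ with 0 < β, ε = ±1. For dyadic μ, λ with 1 ≪ μ ≪ λ, and frequencies ξ, η ∈ ℝⁿ with |ξ₁| ∼ |ξ| ∼ μ and |η₁| ∼ |η| ∼ λ, the Jacobian of the change of variables (ξ₁, η) ↦ (σ, α) = (ξ + η, m(ξ) + m(η)) satisfies J = |2(ξ₁ - η₁) - 2βε ξ₁|ξ|^{-2β-2} + 2βε η₁|η|^{-2β-2}| ∼ λ. -/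
open Real

lemma aux_bound (β : ℝ) (hβ : 0 < β) (ε : ℝ) (hεabs : |ε| = 1)
    (x r : ℝ) (hr1 : 1 ≤ r) (hxr : |x| ≤ r) :
    |2 * β * ε * x * r ^ (-2 * β - 2)| ≤ 2 * β := by
  have hrpos : 0 < r := by linarith
  have hp : (0:ℝ) < r ^ (-2 * β - 2) := Real.rpow_pos_of_pos hrpos _
  have key : r ^ (-2 * β - 2) * r ≤ 1 := by
    have h1 : r ^ (-2 * β - 2 + 1) ≤ 1 :=
      Real.rpow_le_one_of_one_le_of_nonpos hr1 (by linarith)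
    rw [Real.rpow_add hrpos, Real.rpow_one] at h1
    exact h1
  have habs : |2 * β * ε * x * r ^ (-2 * β - 2)|
      = 2 * β * |x| * r ^ (-2 * β - 2) := by
    rw [abs_mul, abs_mul, abs_mul, hεabs,
      abs_of_pos hp, abs_of_pos (show (0:ℝ) < 2 * β by linarith)]
    ring
  rw [habs]
  have hx0 : 0 ≤ |x| := abs_nonneg x
  nlinarith [mul_le_mul_of_nonneg_left key (show (0:ℝ) ≤ 2 * β by linarith),
    mul_le_mul_of_nonneg_right hxr hp.le]

/-- Jacobian bound for the change of variables `(ξ₁, η) ↦ (ξ + η, m(ξ) + m(η))` with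
`m(ξ) = |ξ|² + ε|ξ|^{-2β}`: if `1 ≪ μ ≪ λ`, `|ξ₁| ∼ |ξ| ∼ μ`, `|η₁| ∼ |η| ∼ λ`, then
`J = |2(ξ₁ - η₁) - 2βεξ₁|ξ|^{-2β-2} + 2βεη₁|η|^{-2β-2}| ∼ λ`. Here `rξ = |ξ|`, `rη = |η|`. -/
theorem stmt17 (β : ℝ) (hβ : 0 < β) (ε : ℝ) (hε : ε = 1 ∨ ε = -1) :
    ∃ M c C : ℝ, 1 ≤ M ∧ 0 < c ∧ 0 < C ∧
      ∀ μ lam ξ₁ η₁ rξ rη : ℝ,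
        M ≤ μ → M * μ ≤ lam →
        μ / 2 ≤ |ξ₁| → |ξ₁| ≤ rξ → μ / 2 ≤ rξ → rξ ≤ 2 * μ →
        lam / 2 ≤ |η₁| → |η₁| ≤ rη → lam / 2 ≤ rη → rη ≤ 2 * lam →
        c * lam ≤ |2 * (ξ₁ - η₁) - 2 * β * ε * ξ₁ * rξ ^ (-2 * β - 2)
            + 2 * β * ε * η₁ * rη ^ (-2 * β - 2)| ∧
        |2 * (ξ₁ - η₁) - 2 * β * ε * ξ₁ * rξ ^ (-2 * β - 2)
            + 2 * β * ε * η₁ * rη ^ (-2 * β - 2)| ≤ C * lam := by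
  refine ⟨8 + 4 * β, 1/4, 9, by linarith, by norm_num, by norm_num, ?_⟩
  intro μ lam ξ₁ η₁ rξ rη hM hlam hξ₁ hξr hrμ hr2μ hη₁ hηr hrl hr2l
  have hεabs : |ε| = 1 := by rcases hε with h | h <;> simp [h]
  have hμpos : (0:ℝ) < μ := by linarith
  have hlam0 : (0:ℝ) < lam := by nlinarith
  have hrξ1 : 1 ≤ rξ := by linarith
  have hrη1 : 1 ≤ rη := by nlinarith
  have hmul8 : 8 * μ ≤ lam := by nlinarith
  have h16β : 16 * β ≤ lam := by nlinarith [sq_nonneg (8 + 4 * β - μ)]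
  have hA := aux_bound β hβ ε hεabs ξ₁ rξ hrξ1 hξr
  have hB := aux_bound β hβ ε hεabs η₁ rη hrη1 hηr
  obtain ⟨hA1, hA2⟩ := abs_le.mp hA
  obtain ⟨hB1, hB2⟩ := abs_le.mp hB
  have hξlo : -(2 * μ) ≤ ξ₁ := by
    have := neg_abs_le ξ₁; linarith
  have hξhi : ξ₁ ≤ 2 * μ := by
    have := le_abs_self ξ₁; linarith
  rcases abs_cases η₁ with ⟨he, hs⟩ | ⟨he, hs⟩ <;>
    rcases abs_cases (2 * (ξ₁ - η₁) - 2 * β * ε * ξ₁ * rξ ^ (-2 * β - 2)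
      + 2 * β * ε * η₁ * rη ^ (-2 * β - 2)) with ⟨hE, _⟩ | ⟨hE, _⟩ <;>
    rw [hE] <;> constructor <;> linarith [he ▸ hη₁, he ▸ hηr]
end
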